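/- arXiv:2004.04183 — 3 statements merged into one kernel-verified Lean document; each statement's English description precedes it below -/
import Mathlib

section
/- The functor Set^↓ → Fun(Setᵒᵖ, Set) sending a bundle π : E → B to the Dirichlet functor X ↦ Σ_{b ∈ B} (X → π⁻¹(b)) is fully faithful. -/
/-!
This is the Yoneda argument. Over the fiber `π⁻¹(b)` the Dirichlet functor of `π` has the
canonical element `(b, id)`, and every element `(b, h)` at `X` is its restriction along
`h : X → π⁻¹(b)`. A natural transformation `η` is therefore determined by its values on these
canonical elements, and those values are exactly a bundle map: the base point gives `f b`, and
the fiber map evaluated at `e` gives `g e`.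
-/

open CategoryTheory CategoryTheory.Limits Opposite

universe u

/-- The fiber `π⁻¹(b)` of a bundle `π : E → B` over `b ∈ B`. -/
abbrev fiber (π : Arrow (Type u)) (b : π.right) : Type u := { e : π.left // π.hom e = b }

/-- The Dirichlet extent functor `Set^↓ → Fun(Setᵒᵖ, Set)`, sending a bundle
`π : E → B` to the Dirichlet functor `X ↦ Σ (b : B), (X → π⁻¹ b)` and a
bundle map `(f, g)` to the natural transformation `(b, h) ↦ (f b, g ∘ h)`. -/
def DirExt : Arrow (Type u) ⥤ ((Type u)ᵒᵖ ⥤ Type u) where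
  obj π :=
    { obj := fun X => Σ b : π.right, X.unop → fiber π b
      map := fun g => TypeCat.ofHom fun s => ⟨s.1, fun y => s.2 (g.unop y)⟩ }
  map {π π'} φ :=
    { app := fun X => TypeCat.ofHom fun s =>
        ⟨φ.right s.1, fun x =>
          ⟨φ.left (s.2 x).1, by
            have h := ConcreteCategory.congr_hom φ.w (s.2 x).1
            simp only [Functor.id_map, types_comp_apply] at h
            rw [h]; exact congrArg φ.right (s.2 x).2⟩⟩ }

namespace DirExt

variable {π π' : Arrow (Type u)}

def tautSec (π : Arrow (Type u)) (b : π.right) : (DirExt.obj π).obj (op (fiber π b)) :=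
  (⟨b, id⟩ : Σ b' : π.right, fiber π b → fiber π b')

lemma app_mk_eq (η : DirExt.obj π ⟶ DirExt.obj π') (X : (Type u)ᵒᵖ) (b : π.right)
    (h : X.unop → fiber π b) :
    η.app X (⟨b, h⟩ : Σ b : π.right, X.unop → fiber π b) =
      (⟨(η.app _ (tautSec π b)).1, fun x => (η.app _ (tautSec π b)).2 (h x)⟩ :
        Σ b : π'.right, X.unop → fiber π' b) :=
  ConcreteCategory.congr_hom (η.naturality (TypeCat.ofHom h).op) (tautSec π b)

def baseMap (η : DirExt.obj π ⟶ DirExt.obj π') (b : π.right) : π'.right :=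
  (η.app _ (tautSec π b)).1

def totalMap (η : DirExt.obj π ⟶ DirExt.obj π') (e : π.left) : π'.left :=
  ((η.app _ (tautSec π (π.hom e))).2 ⟨e, rfl⟩).1

lemma hom_totalMap (η : DirExt.obj π ⟶ DirExt.obj π') (e : π.left) :
    π'.hom (totalMap η e) = baseMap η (π.hom e) :=
  ((η.app _ (tautSec π (π.hom e))).2 ⟨e, rfl⟩).2

lemma totalMap_of_mem_fiber (η : DirExt.obj π ⟶ DirExt.obj π') {b : π.right}
    (x : fiber π b) : totalMap η x.1 = ((η.app _ (tautSec π b)).2 x).1 := by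
  obtain ⟨e, rfl⟩ := x
  rfl

def preimage (η : DirExt.obj π ⟶ DirExt.obj π') : π ⟶ π' :=
  Arrow.homMk (u := TypeCat.ofHom (totalMap η)) (v := TypeCat.ofHom (baseMap η)) <| by
    ext e
    exact hom_totalMap η e

lemma map_preimage (η : DirExt.obj π ⟶ DirExt.obj π') : DirExt.map (preimage η) = η := by
  ext X ⟨b, h⟩
  refine Eq.trans ?_ (app_mk_eq η X b h).symm
  refine Sigma.ext rfl (heq_of_eq (funext fun x => Subtype.ext ?_))
  exact totalMap_of_mem_fiber η (h x)

lemma map_injective : Function.Injective (DirExt.map : (π ⟶ π') → _) := by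
  intro φ ψ hφψ
  have hright : φ.right = ψ.right := by
    ext b
    exact congrArg (fun η => (η.app _ (tautSec π b)).1) hφψ
  have hleft : φ.left = ψ.left := by
    ext e
    exact congrArg (fun η => ((η.app _ (tautSec π (π.hom e))).2 ⟨e, rfl⟩).1) hφψ
  exact Arrow.hom_ext _ _ hleft hright

end DirExt

/-- The functor `Set^↓ → Fun(Setᵒᵖ, Set)` sending a bundle
`π : E → B` to the Dirichlet functor `X ↦ Σ (b : B), (X → π⁻¹ b)` is fully
faithful. -/
theorem DirExt_fullyFaithful : (DirExt.{u}).Full ∧ (DirExt.{u}).Faithful :=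
  ⟨⟨fun η => ⟨DirExt.preimage η, DirExt.map_preimage η⟩⟩, ⟨fun h => DirExt.map_injective h⟩⟩
end

section
/- A natural transformation φ : D → D' between Dirichlet functors is cartesian (all naturality squares are pullbacks) if and only if the single square formed by applying φ and D, D' to the arrow !_0 : ∅ → 1 — namely the square with vertical maps D(!_0) : D(1) → D(0), D'(!_0) : D'(1) → D'(0) and horizontal maps φ_1, φ_0 — is a pullback in Set. -/
/-!
In `Setᵒᵖ` every set `X` is the wide pullback of `X` copies of `!_0 : 1 → 0` (dually: `X` is the
coproduct of its points), and a Dirichlet functor preserves this connected limit. Hence the naturality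
square of `φ` at `∅ → X` is a wide pullback of copies of the square at `!_0`, so it is a pullback
whenever the latter is. The square at an arbitrary `g : X → X'` then follows by pullback cancellation,
since the square at `∅ → X'` is the square at `g` stacked on the square at `∅ → X`.
-/

open CategoryTheory CategoryTheory.Limits Opposite

universe u

/-- The unique map `!_0 : ∅ → 1`. -/
def bangZero : PEmpty.{u + 1} ⟶ PUnit.{u + 1} := TypeCat.ofHom (fun e => e.elim)

section InitialObject

variable {C E : Type*} [Category C] [Category E] {F G : Cᵒᵖ ⥤ E} (φ : F ⟶ G) {I : C}

theorem NatTrans.isPullback_naturality_of_isInitial (hI : IsInitial I)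
    (h : ∀ X, IsPullback (φ.app (op X)) (F.map (hI.to X).op) (G.map (hI.to X).op) (φ.app (op I)))
    {X X' : C} (g : X ⟶ X') :
    IsPullback (φ.app (op X')) (F.map g.op) (G.map g.op) (φ.app (op X)) := by
  refine IsPullback.of_bot ?_ (φ.naturality g.op).symm (h X)
  rw [← F.map_comp, ← G.map_comp, ← op_comp, hI.hom_ext (hI.to X ≫ g) (hI.to X')]
  exact h X'

end InitialObject

namespace DirichletFunctor

variable (X : Type u)

theorem bangZero_comp_homOfElement (x : X) :
    bangZero ≫ homOfElement x = Types.isInitialPEmpty.to X :=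
  Types.isInitialPEmpty.hom_ext _ _

theorem map_bangZero_map_homOfElement (F : (Type u)ᵒᵖ ⥤ Type u) (x : X)
    (d : F.obj (op X)) :
    F.map bangZero.op (F.map (homOfElement x).op d) = F.map (Types.isInitialPEmpty.to X).op d := by
  rw [← Functor.map_comp_apply, ← op_comp, bangZero_comp_homOfElement]

def bangZeroWideCospan : WidePullbackShape X ⥤ (Type u)ᵒᵖ :=
  WidePullbackShape.wideCospan (op PEmpty.{u + 1}) (fun _ => op PUnit.{u + 1})
    (fun _ => bangZero.op)

noncomputable def bangZeroWideCone : Cone (bangZeroWideCospan X) :=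
  WidePullbackShape.mkCone (Types.isInitialPEmpty.to X).op (fun x => (homOfElement x).op)
    (fun x => by
      change (homOfElement x).op ≫ bangZero.op = _
      rw [← op_comp, bangZero_comp_homOfElement])

def isLimitBangZeroWideCone : IsLimit (bangZeroWideCone X) where
  lift s := Quiver.Hom.op (X := X) (Y := unop s.pt)
    (TypeCat.ofHom fun x => (s.π.app (some x)).unop PUnit.unit)
  fac s j := by
    apply Quiver.Hom.unop_inj
    ext t
    cases j with
    | none => exact t.elim
    | some x => rfl
  uniq s m hm := by
    apply Quiver.Hom.unop_inj
    ext x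
    exact types_congr_hom (congr_arg Quiver.Hom.unop (hm (some x))) PUnit.unit

variable {X} {D : (Type u)ᵒᵖ ⥤ Type u} [PreservesLimitsOfShape (WidePullbackShape X) D]

theorem map_ext {d₁ d₂ : D.obj (op X)}
    (h₀ : D.map (Types.isInitialPEmpty.to X).op d₁ = D.map (Types.isInitialPEmpty.to X).op d₂)
    (h : ∀ x, D.map (homOfElement x).op d₁ = D.map (homOfElement x).op d₂) : d₁ = d₂ :=
  Concrete.isLimit_ext _ (isLimitOfPreserves D (isLimitBangZeroWideCone X)) _ _ <| by
    rintro (_ | x)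
    exacts [h₀, h x]

theorem exists_map_eq (b : D.obj (op PEmpty)) (e : X → D.obj (op PUnit))
    (he : ∀ x, D.map bangZero.op (e x) = b) :
    ∃ d : D.obj (op X),
      D.map (Types.isInitialPEmpty.to X).op d = b ∧ ∀ x, D.map (homOfElement x).op d = e x := by
  let s : ∀ j, (bangZeroWideCospan X ⋙ D).obj j := fun j => Option.casesOn j b e
  have hs : s ∈ (bangZeroWideCospan X ⋙ D).sections := by
    rintro j j' (_ | x)
    · exact (bangZeroWideCospan X ⋙ D).map_id_apply _ _
    · exact he x
  obtain ⟨d, hd, -⟩ := (Types.isLimit_iff (D.mapCone (bangZeroWideCone X))).mp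
    ⟨isLimitOfPreserves D (isLimitBangZeroWideCone X)⟩ s hs
  exact ⟨d, hd none, fun x => hd (some x)⟩

end DirichletFunctor

open DirichletFunctor in
theorem NatTrans.isPullback_naturality_isInitialPEmpty_to (X : Type u) {D D' : (Type u)ᵒᵖ ⥤ Type u}
    [PreservesLimitsOfShape (WidePullbackShape X) D]
    [PreservesLimitsOfShape (WidePullbackShape X) D'] (φ : D ⟶ D')
    (h : IsPullback (φ.app (op PUnit.{u + 1})) (D.map bangZero.{u}.op)
      (D'.map bangZero.{u}.op) (φ.app (op PEmpty.{u + 1}))) :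
    IsPullback (φ.app (op X)) (D.map (Types.isInitialPEmpty.to X).op)
      (D'.map (Types.isInitialPEmpty.to X).op) (φ.app (op PEmpty.{u + 1})) := by
  refine (Types.isPullback_iff _ _ _ _).mpr ⟨(φ.naturality _).symm, ?_, ?_⟩
  · rintro d₁ d₂ ⟨hφ, h₀⟩
    refine map_ext h₀ fun x => Types.ext_of_isPullback h ?_ ?_
    · rw [NatTrans.naturality_apply, NatTrans.naturality_apply, hφ]
    · rw [map_bangZero_map_homOfElement, map_bangZero_map_homOfElement, h₀]
  · intro d' b hd'
    choose e he₁ he₀ using fun x => Types.exists_of_isPullback h (D'.map (homOfElement x).op d') b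
      (by rw [map_bangZero_map_homOfElement, hd'])
    obtain ⟨d, hd₀, hd⟩ := exists_map_eq b e he₀
    refine ⟨d, map_ext ?_ fun x => ?_, hd₀⟩
    · rw [← NatTrans.naturality_apply, hd₀, hd']
    · rw [← NatTrans.naturality_apply, hd, he₁]

/-- A natural transformation `φ : D ⟶ D'` between Dirichlet
functors is cartesian (all naturality squares are pullbacks) if and only if
the single naturality square at the arrow `!_0 : ∅ → 1` — with vertical maps
`D(!_0) : D(1) → D(0)` and `D'(!_0) : D'(1) → D'(0)` and horizontal maps
`φ_1`, `φ_0` — is a pullback in `Set`. -/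
theorem cartesian_iff_pullback_at_bangZero
    (D D' : (Type u)ᵒᵖ ⥤ Type u)
    (hD : ∀ (J : Type u) [SmallCategory J] [IsConnected J],
      Nonempty (PreservesLimitsOfShape J D))
    (hD' : ∀ (J : Type u) [SmallCategory J] [IsConnected J],
      Nonempty (PreservesLimitsOfShape J D'))
    (φ : D ⟶ D') :
    (∀ (X X' : Type u) (g : X ⟶ X'),
        IsPullback (φ.app (op X')) (D.map g.op) (D'.map g.op) (φ.app (op X))) ↔
      IsPullback (φ.app (op PUnit.{u + 1})) (D.map bangZero.{u}.op)
        (D'.map bangZero.{u}.op) (φ.app (op PEmpty.{u + 1})) := by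
  refine ⟨fun h => h _ _ bangZero, fun h X X' g => ?_⟩
  refine NatTrans.isPullback_naturality_of_isInitial φ Types.isInitialPEmpty (fun Y => ?_) g
  have := (hD (WidePullbackShape Y)).some
  have := (hD' (WidePullbackShape Y)).some
  exact NatTrans.isPullback_naturality_isInitialPEmpty_to Y φ h
end

section
/- The category of polynomial functors Set → Set with cartesian natural transformations is equivalent to the category of Dirichlet functors Setᵒᵖ → Set with cartesian natural transformations; under this equivalence the representable polynomial X ↦ X^N corresponds to the representable Dirichlet functor X ↦ N^X. -/
open CategoryTheory CategoryTheory.Limits Opposite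

universe u

/-- The polynomial functor `X ↦ Σ (b : B), (π⁻¹ b → X)` of a bundle `π : E → B`. -/
def polyExt (π : Arrow (Type u)) : Type u ⥤ Type u where
  obj X := Σ b : π.right, fiber π b → X
  map g := TypeCat.ofHom fun s => ⟨s.1, fun e => g (s.2 e)⟩

/-- Objects of the category of polynomial functors. -/
structure PolyCart : Type (u + 1) where
  F : Type u ⥤ Type u
  ispoly : ∃ π : Arrow (Type u), Nonempty (F ≅ polyExt π)

/-- Cartesian natural transformations between polynomial functors. -/
@[ext]
structure PolyCartHom (P Q : PolyCart.{u}) : Type (u + 1) where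
  t : P.F ⟶ Q.F
  cart : ∀ {X Y : Type u} (g : X ⟶ Y),
    IsPullback (t.app X) (P.F.map g) (Q.F.map g) (t.app Y)

/-- The category of polynomial functors and cartesian natural transformations. -/
instance : Category PolyCart.{u} where
  Hom := PolyCartHom
  id P := ⟨𝟙 P.F, fun g => IsPullback.of_horiz_isIso ⟨by simp⟩⟩
  comp f g := ⟨f.t ≫ g.t, fun h => IsPullback.paste_horiz (f.cart h) (g.cart h)⟩
  id_comp f := PolyCartHom.ext (by simp)
  comp_id f := PolyCartHom.ext (by simp)
  assoc f g h := PolyCartHom.ext (by simp)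

/-- A Dirichlet functor: a functor `Setᵒᵖ → Set` preserving connected limits. -/
def IsDirichlet (D : (Type u)ᵒᵖ ⥤ Type u) : Prop :=
  ∀ (J : Type u) [SmallCategory J] [IsConnected J],
    Nonempty (PreservesLimitsOfShape J D)

/-- Objects of the category of Dirichlet functors. -/
structure DirCart : Type (u + 1) where
  F : (Type u)ᵒᵖ ⥤ Type u
  isdir : IsDirichlet F

/-- Cartesian natural transformations between Dirichlet functors. -/
@[ext]
structure DirCartHom (P Q : DirCart.{u}) : Type (u + 1) where
  t : P.F ⟶ Q.F
  cart : ∀ {X Y : (Type u)ᵒᵖ} (g : X ⟶ Y),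
    IsPullback (t.app X) (P.F.map g) (Q.F.map g) (t.app Y)

/-- The category of Dirichlet functors and cartesian natural transformations. -/
instance : Category DirCart.{u} where
  Hom := DirCartHom
  id P := ⟨𝟙 P.F, fun g => IsPullback.of_horiz_isIso ⟨by simp⟩⟩
  comp f g := ⟨f.t ≫ g.t, fun h => IsPullback.paste_horiz (f.cart h) (g.cart h)⟩
  id_comp f := DirCartHom.ext (by simp)
  comp_id f := DirCartHom.ext (by simp)
  assoc f g h := DirCartHom.ext (by simp)

/-!
Both categories are equivalent to the category of bundles `π : E → B` with pullback squares, via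
`π ↦ (X ↦ Σ b, (E_b → X))` and `π ↦ (X ↦ Σ b, (X → E_b))`. By Yoneda, a natural transformation
out of either functor is determined by its value on the generic element `⟨b, id⟩`, that is by a
map of bases and maps between fibres; being cartesian at `X → 1` (resp. at `∅ → X`) forces the
fibre maps to be bijective. A Dirichlet functor `D` comes from the bundle `D(1) → D(0)`: every set
`X` is the wide pushout of `X` points over `∅`, a connected colimit, so `D(X)` is the
wide pullback of `X` copies of `D(1)` over `D(0)`. The bundle `N → 1` gives `X^N` and `N^X`.
-/

/-- A pullback square of sets from `π` to `π'` amounts to a map of bases together with bijections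
between the fibres. -/
structure BundHom (π π' : Arrow (Type u)) : Type u where
  base : π.right → π'.right
  fib : ∀ b, fiber π b ≃ fiber π' (base b)

structure Bund : Type (u + 1) where
  π : Arrow (Type u)

instance : Category Bund.{u} where
  Hom A B := BundHom A.π B.π
  id _ := ⟨id, fun _ => Equiv.refl _⟩
  comp f g := ⟨g.base ∘ f.base, fun b => (f.fib b).trans (g.fib (f.base b))⟩

def PolyCart.isoMk {P Q : PolyCart.{u}} (e : P.F ≅ Q.F) : P ≅ Q where
  hom := ⟨e.hom, fun g => (NatTrans.Equifibered.of_isIso e.hom g).flip⟩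
  inv := ⟨e.inv, fun g => (NatTrans.Equifibered.of_isIso e.inv g).flip⟩
  hom_inv_id := PolyCartHom.ext e.hom_inv_id
  inv_hom_id := PolyCartHom.ext e.inv_hom_id

def DirCart.isoMk {P Q : DirCart.{u}} (e : P.F ≅ Q.F) : P ≅ Q where
  hom := ⟨e.hom, fun g => (NatTrans.Equifibered.of_isIso e.hom g).flip⟩
  inv := ⟨e.inv, fun g => (NatTrans.Equifibered.of_isIso e.inv g).flip⟩
  hom_inv_id := DirCartHom.ext e.hom_inv_id
  inv_hom_id := DirCartHom.ext e.inv_hom_id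

def DirCart.forget : DirCart.{u} ⥤ (Type u)ᵒᵖ ⥤ Type u where
  obj P := P.F
  map f := f.t

section Polynomial

variable {π π' : Arrow (Type u)}

def BundHom.polyMap (f : BundHom π π') : polyExt π ⟶ polyExt π' where
  app _ := TypeCat.ofHom fun s => ⟨f.base s.1, s.2 ∘ (f.fib s.1).symm⟩

theorem BundHom.equifibered_polyMap (f : BundHom π π') : NatTrans.Equifibered f.polyMap := by
  intro X Y g
  rw [Types.isPullback_iff]
  refine ⟨rfl, ?_, ?_⟩
  · rintro ⟨b₁, k₁⟩ ⟨b₂, k₂⟩ ⟨h₁, h₂⟩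
    obtain rfl : b₁ = b₂ := congrArg Sigma.fst h₁
    exact congrArg _ ((f.fib b₁).symm.surjective.injective_comp_right (sigma_mk_injective h₂))
  · rintro ⟨b, v⟩ ⟨b', u⟩ h
    obtain rfl : b' = f.base b := (congrArg Sigma.fst h).symm
    refine ⟨⟨b, u ∘ f.fib b⟩, ?_, ?_⟩
    · have hv : g ∘ u = v ∘ (f.fib b).symm := (sigma_mk_injective h).symm
      refine congrArg _ (funext fun e => ?_)
      simpa using congrFun hv (f.fib b e)
    · exact congrArg _ (funext fun e' => congrArg u ((f.fib b).apply_symm_apply e'))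

variable (t : polyExt π ⟶ polyExt π')

theorem polyExt_hom_app_mk {X : Type u} (b : π.right) (k : fiber π b → X) :
    t.app X ⟨b, k⟩ = ⟨(t.app _ ⟨b, id⟩).1, k ∘ (t.app _ ⟨b, id⟩).2⟩ :=
  ConcreteCategory.congr_hom (t.naturality (TypeCat.ofHom k)) ⟨b, id⟩

variable {t}

theorem NatTrans.Equifibered.bijective_comp_polyExt_generic (ht : NatTrans.Equifibered t)
    (b : π.right) (X : Type u) :
    Function.Bijective fun k : fiber π b → X => k ∘ (t.app _ ⟨b, id⟩).2 := by
  obtain ⟨-, hinj, hex⟩ :=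
    (Types.isPullback_iff _ _ _ _).1 (ht (TypeCat.ofHom fun _ : X => PUnit.unit.{u + 1}))
  refine ⟨fun k₁ k₂ h => sigma_mk_injective (hinj ⟨b, k₁⟩ ⟨b, k₂⟩ ⟨rfl, ?_⟩), fun k' => ?_⟩
  · rw [polyExt_hom_app_mk t b k₁, polyExt_hom_app_mk t b k₂]
    exact congrArg _ h
  · obtain ⟨⟨b₀, k⟩, h₁, h₂⟩ := hex ⟨b, fun _ => PUnit.unit⟩ ⟨_, k'⟩
      (by rw [polyExt_hom_app_mk]; rfl)
    obtain rfl : b₀ = b := congrArg Sigma.fst h₁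
    rw [polyExt_hom_app_mk] at h₂
    exact ⟨k, sigma_mk_injective h₂⟩

theorem NatTrans.Equifibered.bijective_polyExt_generic (ht : NatTrans.Equifibered t) (b : π.right) :
    Function.Bijective (t.app _ ⟨b, id⟩).2 :=
  have h := bijective_comp_polyExt_generic ht b (ULift Bool)
  ⟨Function.surjective_comp_right_iff_injective.1 h.2,
    Function.injective_comp_right_iff_surjective.1 h.1⟩

noncomputable def BundHom.ofPolyExtHom (ht : NatTrans.Equifibered t) : BundHom π π' where
  base b := (t.app _ ⟨b, id⟩).1
  fib b := (Equiv.ofBijective _ (NatTrans.Equifibered.bijective_polyExt_generic ht b)).symm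

theorem BundHom.polyMap_ofPolyExtHom (ht : NatTrans.Equifibered t) :
    (BundHom.ofPolyExtHom ht).polyMap = t := by
  ext X ⟨b, k⟩
  exact (polyExt_hom_app_mk t b k).symm

theorem BundHom.ofPolyExtHom_polyMap (f : BundHom π π') :
    BundHom.ofPolyExtHom f.equifibered_polyMap = f := by
  obtain ⟨base, fib⟩ := f
  exact congrArg (BundHom.mk base)
    (funext fun b => Equiv.ext fun e => (Equiv.symm_apply_eq _).2 ((fib b).symm_apply_apply e).symm)

end Polynomial

theorem PolyCartHom.equifibered {P Q : PolyCart.{u}} (f : PolyCartHom P Q) :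
    NatTrans.Equifibered f.t :=
  fun _ _ g => (f.cart g).flip

def Bund.toPoly : Bund.{u} ⥤ PolyCart.{u} where
  obj A := ⟨polyExt A.π, A.π, ⟨Iso.refl _⟩⟩
  map f := ⟨f.polyMap, fun g => (f.equifibered_polyMap g).flip⟩

noncomputable def Bund.fullyFaithfulToPoly : Bund.toPoly.{u}.FullyFaithful where
  preimage f := BundHom.ofPolyExtHom f.equifibered
  map_preimage _ := PolyCartHom.ext (BundHom.polyMap_ofPolyExtHom _)
  preimage_map := BundHom.ofPolyExtHom_polyMap

instance : Bund.toPoly.{u}.IsEquivalence where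
  full := Bund.fullyFaithfulToPoly.full
  faithful := Bund.fullyFaithfulToPoly.faithful
  essSurj := ⟨fun P => P.ispoly.elim fun π ⟨e⟩ => ⟨⟨π⟩, ⟨(PolyCart.isoMk e).symm⟩⟩⟩

def dirExt (π : Arrow (Type u)) : (Type u)ᵒᵖ ⥤ Type u where
  obj X := Σ b : π.right, X.unop → fiber π b
  map g := TypeCat.ofHom fun s => ⟨s.1, s.2 ∘ g.unop⟩

theorem dirExt.obj_ext {π : Arrow (Type u)} {X : (Type u)ᵒᵖ} {σ τ : (dirExt π).obj X}
    (h₁ : σ.1 = τ.1) (h₂ : ∀ x, (σ.2 x).1 = (τ.2 x).1) : σ = τ := by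
  obtain ⟨b, v⟩ := σ
  obtain ⟨b', v'⟩ := τ
  obtain rfl : b = b' := h₁
  exact congrArg _ (funext fun x => Subtype.ext (h₂ x))

theorem dirExt.val_congr {π : Arrow (Type u)} {X : (Type u)ᵒᵖ} {σ τ : (dirExt π).obj X}
    (h : σ = τ) (x : X.unop) : (σ.2 x).1 = (τ.2 x).1 := by
  rw [h]

theorem isDirichlet_dirExt (π : Arrow (Type u)) : IsDirichlet (dirExt π) := by
  intro J _ _
  refine ⟨⟨fun {K} => ⟨fun {c} hc => (Types.isLimit_iff _).2 fun s hs => ?_⟩⟩⟩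
  obtain ⟨j₀⟩ : Nonempty J := inferInstance
  have hb : ∀ j, (s j).1 = (s j₀).1 := fun j =>
    constant_of_preserves_morphisms (fun j => (s j).1) (fun _ _ f => congrArg Sigma.fst (hs f)) j j₀
  -- By connectedness the section lies over a single base point; its fibre components then form a
  -- cone over `K` with vertex that fibre, which factors uniquely through `c`.
  let u (j : J) (x : (K.obj j).unop) : fiber π (s j₀).1 :=
    ⟨((s j).2 x).1, ((s j).2 x).2.trans (hb j)⟩
  have hu {j j' : J} (f : j ⟶ j') (x : (K.obj j').unop) : (u j' x).1 = (u j ((K.map f).unop x)).1 :=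
    dirExt.val_congr (hs f).symm x
  let cn : Cone K :=
    { pt := op (fiber π (s j₀).1)
      π := { app j := (TypeCat.ofHom (u j)).op
             naturality _ _ f := Quiver.Hom.unop_inj (by ext x; exact Subtype.ext (hu f x)) } }
  refine ⟨⟨(s j₀).1, (hc.lift cn).unop⟩, fun j => dirExt.obj_ext (hb j).symm fun x => ?_, ?_⟩
  · exact congrArg Subtype.val
      (ConcreteCategory.congr_hom (congrArg Quiver.Hom.unop (hc.fac cn j)) x)
  · rintro ⟨b, v⟩ hv
    obtain rfl : b = (s j₀).1 := congrArg Sigma.fst (hv j₀)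
    have : (TypeCat.ofHom v).op = hc.lift cn := hc.uniq cn _ fun j => Quiver.Hom.unop_inj (by
      ext x
      exact dirExt.val_congr (hv j) x)
    rw [← this]
    rfl

def fromPEmpty (X : Type u) : PEmpty.{u + 1} ⟶ X := TypeCat.ofHom PEmpty.elim

def fromPUnit {X : Type u} (x : X) : PUnit.{u + 1} ⟶ X := TypeCat.ofHom fun _ => x

theorem fromPEmpty_comp {X Y : Type u} (f : X ⟶ Y) : fromPEmpty X ≫ f = fromPEmpty Y := by
  ext e
  exact e.elim

theorem fromPEmpty_pEmpty : fromPEmpty PEmpty.{u + 1} = 𝟙 _ := by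
  ext e
  exact e.elim

theorem fromPUnit_comp {X Y : Type u} (x : X) (f : X ⟶ Y) : fromPUnit x ≫ f = fromPUnit (f x) :=
  rfl

theorem fromPUnit_unit : fromPUnit PUnit.unit.{u + 1} = 𝟙 _ :=
  rfl

section Dirichlet

variable {π π' : Arrow (Type u)}

def BundHom.dirMap (f : BundHom π π') : dirExt π ⟶ dirExt π' where
  app _ := TypeCat.ofHom fun s => ⟨f.base s.1, f.fib s.1 ∘ s.2⟩

theorem BundHom.equifibered_dirMap (f : BundHom π π') : NatTrans.Equifibered f.dirMap := by
  intro X Y g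
  rw [Types.isPullback_iff]
  refine ⟨rfl, ?_, ?_⟩
  · rintro ⟨b₁, k₁⟩ ⟨b₂, k₂⟩ ⟨h₁, h₂⟩
    obtain rfl : b₁ = b₂ := congrArg Sigma.fst h₁
    exact congrArg _ ((f.fib b₁).injective.comp_left (sigma_mk_injective h₂))
  · rintro ⟨b, v⟩ ⟨b', u⟩ h
    obtain rfl : b' = f.base b := (congrArg Sigma.fst h).symm
    refine ⟨⟨b, (f.fib b).symm ∘ u⟩, ?_, ?_⟩
    · have hv : u ∘ g.unop = f.fib b ∘ v := (sigma_mk_injective h).symm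
      refine congrArg _ (funext fun y => ?_)
      simpa using congrArg (f.fib b).symm (congrFun hv y)
    · exact congrArg _ (funext fun x => (f.fib b).apply_symm_apply (u x))

variable (t : dirExt π ⟶ dirExt π')

theorem dirExt_hom_app_mk {X : (Type u)ᵒᵖ} (b : π.right) (k : X.unop → fiber π b) :
    t.app X ⟨b, k⟩ = ⟨(t.app _ ⟨b, id⟩).1, (t.app (op (fiber π b)) ⟨b, id⟩).2 ∘ k⟩ :=
  ConcreteCategory.congr_hom (t.naturality (TypeCat.ofHom k).op) ⟨b, id⟩

variable {t}

theorem NatTrans.Equifibered.bijective_comp_dirExt_generic (ht : NatTrans.Equifibered t)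
    (b : π.right) (X : Type u) :
    Function.Bijective fun k : X → fiber π b => (t.app (op (fiber π b)) ⟨b, id⟩).2 ∘ k := by
  obtain ⟨-, hinj, hex⟩ := (Types.isPullback_iff _ _ _ _).1
    (ht (fromPEmpty X).op)
  refine ⟨fun k₁ k₂ h => sigma_mk_injective (hinj ⟨b, k₁⟩ ⟨b, k₂⟩ ⟨?_, ?_⟩), fun k' => ?_⟩
  · exact congrArg (Sigma.mk b) (funext fun e : PEmpty => e.elim)
  · rw [dirExt_hom_app_mk t b k₁, dirExt_hom_app_mk t b k₂]
    exact congrArg _ h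
  · obtain ⟨⟨b₀, k⟩, h₁, h₂⟩ := hex ⟨b, PEmpty.elim⟩ ⟨_, k'⟩
      (by rw [dirExt_hom_app_mk]; exact congrArg _ (funext fun e : PEmpty => e.elim))
    obtain rfl : b₀ = b := congrArg Sigma.fst h₁
    rw [dirExt_hom_app_mk] at h₂
    exact ⟨k, sigma_mk_injective h₂⟩

theorem NatTrans.Equifibered.bijective_dirExt_generic (ht : NatTrans.Equifibered t) (b : π.right) :
    Function.Bijective (t.app (op (fiber π b)) ⟨b, id⟩).2 :=
  have h := bijective_comp_dirExt_generic ht b PUnit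
  ⟨Function.injective_comp_left_iff.1 h.1, Function.surjective_comp_left_iff.1 h.2⟩

noncomputable def BundHom.ofDirExtHom (ht : NatTrans.Equifibered t) : BundHom π π' where
  base b := (t.app (op (fiber π b)) ⟨b, id⟩).1
  fib b := Equiv.ofBijective _ (NatTrans.Equifibered.bijective_dirExt_generic ht b)

theorem BundHom.dirMap_ofDirExtHom (ht : NatTrans.Equifibered t) :
    (BundHom.ofDirExtHom ht).dirMap = t := by
  ext X ⟨b, k⟩
  exact (dirExt_hom_app_mk t b k).symm

theorem BundHom.ofDirExtHom_dirMap (f : BundHom π π') :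
    BundHom.ofDirExtHom f.equifibered_dirMap = f := by
  obtain ⟨base, fib⟩ := f
  exact congrArg (BundHom.mk base) (funext fun b => Equiv.ext fun _ => rfl)

end Dirichlet

theorem DirCartHom.equifibered {P Q : DirCart.{u}} (f : DirCartHom P Q) :
    NatTrans.Equifibered f.t :=
  fun _ _ g => (f.cart g).flip

def Bund.toDir : Bund.{u} ⥤ DirCart.{u} where
  obj A := ⟨dirExt A.π, isDirichlet_dirExt A.π⟩
  map f := ⟨f.dirMap, fun g => (f.equifibered_dirMap g).flip⟩

noncomputable def Bund.fullyFaithfulToDir : Bund.toDir.{u}.FullyFaithful where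
  preimage f := BundHom.ofDirExtHom f.equifibered
  map_preimage _ := DirCartHom.ext (BundHom.dirMap_ofDirExtHom _)
  preimage_map := BundHom.ofDirExtHom_dirMap

theorem NatTrans.isIso_app_of_isLimit {J C D : Type*} [Category J] [Category C] [Category D]
    {F G : C ⥤ D} (α : F ⟶ G) {K : J ⥤ C} {c : Cone K} (hF : IsLimit (F.mapCone c))
    (hG : IsLimit (G.mapCone c)) (h : ∀ j, IsIso (α.app (K.obj j))) : IsIso (α.app c.pt) := by
  have : ∀ j, IsIso ((Functor.whiskerLeft K α).app j) := h
  have : IsIso (Functor.whiskerLeft K α) := NatIso.isIso_of_isIso_app _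
  have hα : α.app c.pt = (hF.conePointsIsoOfNatIso hG (asIso (Functor.whiskerLeft K α))).hom :=
    hG.hom_ext fun j => (α.naturality (c.π.app j)).symm.trans
      (hF.conePointsIsoOfNatIso_hom_comp hG (asIso (Functor.whiskerLeft K α)) j).symm
  rw [hα]
  infer_instance

def pointsSpan (X : Type u) : WidePushoutShape X ⥤ Type u :=
  WidePushoutShape.wideSpan PEmpty (fun _ => PUnit) fun _ => fromPEmpty _

def pointsCocone (X : Type u) : Cocone (pointsSpan X) :=
  WidePushoutShape.mkCocone (fromPEmpty X) fromPUnit fun _ => fromPEmpty_comp _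

def isColimitPointsCocone (X : Type u) : IsColimit (pointsCocone X) where
  desc s := TypeCat.ofHom fun x => s.ι.app (some x) PUnit.unit
  fac s j := by
    rcases j with _ | x
    · ext e
      exact e.elim
    · rfl
  uniq s m w := by
    ext x
    exact ConcreteCategory.congr_hom (w (some x)) PUnit.unit

namespace DirCart

variable (D : DirCart.{u})

def bundle : Arrow (Type u) := Arrow.mk (D.F.map (fromPEmpty PUnit).op)

def toDirExt : D.F ⟶ dirExt D.bundle where
  app X := TypeCat.ofHom fun d => ⟨D.F.map (fromPEmpty X.unop).op d, fun x =>
    ⟨D.F.map (fromPUnit x).op d, by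
      change D.F.map _ (D.F.map _ d) = _
      rw [← Functor.map_comp_apply, ← op_comp, fromPEmpty_comp]⟩⟩
  naturality X Y g := by
    ext d
    refine dirExt.obj_ext ?_ fun y => ?_
    · change D.F.map _ (D.F.map _ d) = D.F.map _ d
      rw [← Functor.map_comp_apply, ← Quiver.Hom.op_unop g, ← op_comp, fromPEmpty_comp]
    · change D.F.map _ (D.F.map _ d) = D.F.map _ d
      rw [← Functor.map_comp_apply, ← Quiver.Hom.op_unop g, ← op_comp, fromPUnit_comp]
      rfl

theorem bijective_toDirExt_app_pEmpty : Function.Bijective (D.toDirExt.app (op PEmpty)) := by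
  have hid (d : D.F.obj (op PEmpty)) : D.F.map (fromPEmpty PEmpty).op d = d := by
    rw [fromPEmpty_pEmpty, op_id, Functor.map_id_apply]
  refine ⟨fun d d' h => ?_, fun ⟨b, _⟩ => ⟨b, dirExt.obj_ext (hid b) fun e => e.elim⟩⟩
  exact (hid d).symm.trans ((congrArg Sigma.fst h).trans (hid d'))

theorem bijective_toDirExt_app_pUnit : Function.Bijective (D.toDirExt.app (op PUnit)) := by
  have hid (d : D.F.obj (op PUnit)) : D.F.map (fromPUnit PUnit.unit).op d = d := by
    rw [fromPUnit_unit, op_id, Functor.map_id_apply]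
  refine ⟨fun d d' h => ?_, fun ⟨_, v⟩ =>
    ⟨(v PUnit.unit).1, dirExt.obj_ext (v PUnit.unit).2 fun _ => hid _⟩⟩
  exact (hid d).symm.trans ((dirExt.val_congr h PUnit.unit).trans (hid d'))

theorem isIso_toDirExt_app (X : (Type u)ᵒᵖ) : IsIso (D.toDirExt.app X) := by
  have := (D.isdir (WidePushoutShape X.unop)ᵒᵖ).some
  have := (isDirichlet_dirExt D.bundle (WidePushoutShape X.unop)ᵒᵖ).some
  have hc := (isColimitPointsCocone X.unop).op
  refine NatTrans.isIso_app_of_isLimit D.toDirExt (isLimitOfPreserves D.F hc)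
    (isLimitOfPreserves _ hc) ?_
  rintro ⟨_ | x⟩
  · exact (isIso_iff_bijective _).2 D.bijective_toDirExt_app_pEmpty
  · exact (isIso_iff_bijective _).2 D.bijective_toDirExt_app_pUnit

instance isIso_toDirExt : IsIso D.toDirExt :=
  have := D.isIso_toDirExt_app
  NatIso.isIso_of_isIso_app _

theorem mem_essImage_toDir : Bund.toDir.essImage D :=
  ⟨⟨D.bundle⟩, ⟨DirCart.isoMk (P := Bund.toDir.obj ⟨D.bundle⟩) (asIso D.toDirExt).symm⟩⟩

end DirCart

instance : Bund.toDir.{u}.IsEquivalence where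
  full := Bund.fullyFaithfulToDir.full
  faithful := Bund.fullyFaithfulToDir.faithful
  essSurj := ⟨DirCart.mem_essImage_toDir⟩

def bundleToPUnit (N : Type u) : Arrow (Type u) :=
  Arrow.mk (TypeCat.ofHom fun _ : N => PUnit.unit.{u + 1})

def coyonedaIsoPolyExt (N : Type u) : coyoneda.obj (op N) ≅ polyExt (bundleToPUnit N) :=
  NatIso.ofComponents fun X => Equiv.toIso
    { toFun (k : N ⟶ X) := ⟨PUnit.unit, fun e => k e.1⟩
      invFun s := TypeCat.ofHom fun n => s.2 ⟨n, rfl⟩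
      left_inv _ := rfl
      right_inv _ := rfl }

def dirExtIsoYoneda (N : Type u) : dirExt (bundleToPUnit N) ≅ yoneda.obj N :=
  NatIso.ofComponents fun X => Equiv.toIso
    { toFun s := TypeCat.ofHom fun x => (s.2 x).1
      invFun (k : X.unop ⟶ N) := ⟨PUnit.unit, fun x => ⟨k x, rfl⟩⟩
      left_inv _ := rfl
      right_inv _ := rfl }

/-- The category of polynomial functors with cartesian natural
transformations is equivalent to the category of Dirichlet functors with
cartesian natural transformations; under this equivalence the representable
polynomial `X ↦ X^N` corresponds to the representable Dirichlet functor
`X ↦ N^X`. -/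
theorem polyCart_equiv_dirCart :
    ∃ e : PolyCart.{u} ≌ DirCart.{u},
      ∀ (P : PolyCart.{u}) (N : Type u),
        Nonempty (P.F ≅ coyoneda.obj (op N)) →
          Nonempty ((e.functor.obj P).F ≅ yoneda.obj N) := by
  refine ⟨Bund.toPoly.asEquivalence.symm.trans Bund.toDir.asEquivalence, fun P N ⟨i⟩ => ⟨?_⟩⟩
  let j : Bund.toPoly.inv.obj P ≅ ⟨bundleToPUnit N⟩ := Bund.toPoly.preimageIso
    (Bund.toPoly.asEquivalence.counitIso.app P ≪≫ PolyCart.isoMk (i ≪≫ coyonedaIsoPolyExt N))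
  exact DirCart.forget.mapIso (Bund.toDir.mapIso j) ≪≫ dirExtIsoYoneda N
end
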